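/- arXiv:1505.04289 — 4 statements merged into one kernel-verified Lean document; each statement's English description precedes it below -/
import Mathlib

section
/- Let P and Q be finite posets on [d], and let Δ(P,−Q) ⊂ ℝ^d be the convex hull of Ω(P,−Q) = {ρ(I) : ∅ ≠ I ∈ 𝒥(P)} ∪ {−ρ(J) : ∅ ≠ J ∈ 𝒥(Q)} ∪ {0}. If P and Q possess a common linear extension, then the origin 0 of ℝ^d belongs to the interior of Δ(P,−Q). -/
/-- A poset ideal (down-set) of a partial order `P` on `Fin d`. -/
def IsIdeal {d : ℕ} (P : PartialOrder (Fin d)) (I : Set (Fin d)) : Prop :=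
  ∀ ⦃i j : Fin d⦄, i ∈ I → P.le j i → j ∈ I

/-- The indicator vector `ρ(I) = Σ_{i ∈ I} e_i` of a subset of `[d]`. -/
noncomputable def rho {d : ℕ} (I : Set (Fin d)) : Fin d → ℝ := I.indicator 1

/-- `σ` is a linear extension of `P`: if `p_{σ a} < p_{σ b}` in `P` then `a < b`. -/
def IsLinExt {d : ℕ} (P : PartialOrder (Fin d)) (σ : Equiv.Perm (Fin d)) : Prop :=
  ∀ a b : Fin d, P.lt (σ a) (σ b) → a < b

/-- `Ω(P, -Q)`. -/
noncomputable def Omega {d : ℕ} (P Q : PartialOrder (Fin d)) : Set (Fin d → ℝ) :=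
  {v | ∃ I : Set (Fin d), IsIdeal P I ∧ I.Nonempty ∧ v = rho I} ∪
  {v | ∃ J : Set (Fin d), IsIdeal Q J ∧ J.Nonempty ∧ v = - rho J} ∪ {0}

lemma ideal_of_linext {d : ℕ} (P : PartialOrder (Fin d)) (σ : Equiv.Perm (Fin d))
    (hP : IsLinExt P σ) (k : Fin d) : IsIdeal P (σ '' {a | a ≤ k}) := by
  rintro i j ⟨a, ha, rfl⟩ hji
  rcases eq_or_ne j (σ a) with rfl | hne
  · exact ⟨a, ha, rfl⟩
  · have hlt : P.lt j (σ a) := lt_of_le_of_ne hji hne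
    have := hP (σ.symm j) a (by simpa using hlt)
    have ha' : a ≤ k := ha
    refine ⟨σ.symm j, ?_, by simp⟩
    show σ.symm j ≤ k
    rw [Fin.le_def] at ha' ⊢
    rw [Fin.lt_def] at this
    omega

lemma rho_eq_sum {d : ℕ} (σ : Equiv.Perm (Fin d)) (k : Fin d) :
    rho (σ '' {a | a ≤ k}) = ∑ b ∈ Finset.Iic k, Pi.single (σ b) (1 : ℝ) := by
  classical
  funext i
  rw [Finset.sum_apply]
  have hterm : ∀ b : Fin d, (Pi.single (σ b) (1 : ℝ) : Fin d → ℝ) i = if b = σ.symm i then (1:ℝ) else 0 := by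
    intro b
    rcases eq_or_ne b (σ.symm i) with rfl | hb
    · simp [Pi.single_apply]
    · have : σ b ≠ i := fun hc => hb (by simp [← hc])
      simp [Pi.single_apply, this, hb]
  simp_rw [hterm]
  rw [Finset.sum_ite_eq' (Finset.Iic k) (σ.symm i) (fun _ => (1 : ℝ))]
  rw [rho, Set.indicator_apply]
  have hmem : i ∈ σ '' {a | a ≤ k} ↔ σ.symm i ∈ Finset.Iic k := by
    constructor
    · rintro ⟨a, ha, rfl⟩; simpa using ha
    · intro hh; exact ⟨σ.symm i, by simpa using hh, by simp⟩
  by_cases hi : i ∈ σ '' {a | a ≤ k}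
  · simp [hi, Finset.mem_Iic.mp (hmem.mp hi)]
  · simp [hi, fun hc => hi (hmem.mpr hc)]

lemma single_mem_span {d : ℕ} (σ : Equiv.Perm (Fin d)) (a : Fin d) :
    Pi.single (σ a) (1 : ℝ) ∈
      Submodule.span ℝ (Set.range fun k : Fin d => rho (σ '' {x | x ≤ k})) := by
  have H : ∀ n : ℕ, ∀ a : Fin d, a.val < n → Pi.single (σ a) (1 : ℝ) ∈
      Submodule.span ℝ (Set.range fun k : Fin d => rho (σ '' {x | x ≤ k})) := by
    intro n
    induction n with
    | zero => intro a ha; exact absurd ha (Nat.not_lt_zero _)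
    | succ n ih =>
      intro a ha
      have hkey : Pi.single (σ a) (1 : ℝ)
          = rho (σ '' {x | x ≤ a}) - ∑ b ∈ Finset.Iio a, Pi.single (σ b) (1 : ℝ) := by
        rw [rho_eq_sum, ← Finset.Iio_insert, Finset.sum_insert (by simp)]
        ring
      rw [hkey]
      refine Submodule.sub_mem _ (Submodule.subset_span ⟨a, rfl⟩) (Submodule.sum_mem _ ?_)
      intro b hb
      rw [Finset.mem_Iio] at hb
      exact ih b (by omega)
  exact H d a a.isLt

theorem zero_mem_interior_of_common_linExt {d : ℕ} (P Q : PartialOrder (Fin d))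
    (h : ∃ σ : Equiv.Perm (Fin d), IsLinExt P σ ∧ IsLinExt Q σ) :
    (0 : Fin d → ℝ) ∈ interior (convexHull ℝ (Omega P Q)) := by
  obtain ⟨σ, hP, hQ⟩ := h
  set v : Fin d → (Fin d → ℝ) := fun k => rho (σ '' {x | x ≤ k}) with hv
  set S : Set (Fin d → ℝ) := Set.range v ∪ -(Set.range v) ∪ {0} with hS
  have hSsub : S ⊆ Omega P Q := by
    rintro x ((⟨k, rfl⟩ | hx) | hx)
    · exact Or.inl (Or.inl ⟨_, ideal_of_linext P σ hP k, ⟨σ k, k, by simp, rfl⟩, rfl⟩)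
    · obtain ⟨k, hk⟩ : -x ∈ Set.range v := hx
      have hxk : x = -(v k) := by rw [hk, neg_neg]
      exact Or.inl (Or.inr ⟨_, ideal_of_linext Q σ hQ k, ⟨σ k, k, by simp, rfl⟩, hxk⟩)
    · rw [Set.mem_singleton_iff] at hx
      exact Or.inr hx
  have hKsub : convexHull ℝ S ⊆ convexHull ℝ (Omega P Q) := convexHull_mono hSsub
  refine interior_mono hKsub ?_
  -- symmetry of S
  have hSneg : -S ⊆ S := by
    have h1 : ∀ x ∈ S, -x ∈ S := by
      rintro x ((⟨k, rfl⟩ | hx) | hx)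
      · exact Or.inl (Or.inr (by show -(-(v k)) ∈ Set.range v; rw [neg_neg]; exact ⟨k, rfl⟩))
      · exact Or.inl (Or.inl hx)
      · rw [Set.mem_singleton_iff] at hx
        exact Or.inr (by simp [hx])
    intro x hx
    have : -x ∈ S := hx
    simpa using h1 _ this
  -- span
  have hspan : Submodule.span ℝ (Set.range v) = ⊤ := by
    rw [← top_le_iff, ← (Pi.basisFun ℝ (Fin d)).span_eq, Submodule.span_le]
    rintro x ⟨i, rfl⟩
    have := single_mem_span σ (σ.symm i)
    simpa using this
  -- affine span of S is top
  have haff : affineSpan ℝ S = ⊤ := by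
    rw [← top_le_iff]
    have h1 : (Submodule.span ℝ (Set.range v) : Set (Fin d → ℝ))
        = (affineSpan ℝ (insert 0 (Set.range v)) : Set (Fin d → ℝ)) :=
      (affineSpan_insert_zero (Set.range v)).symm
    have h2 : affineSpan ℝ (insert 0 (Set.range v)) ≤ affineSpan ℝ S := by
      apply affineSpan_mono
      rintro x (rfl | hx)
      · exact Or.inr rfl
      · exact Or.inl (Or.inl hx)
    intro x _
    apply h2
    show x ∈ (affineSpan ℝ (insert 0 (Set.range v)) : Set (Fin d → ℝ))
    rw [← h1, hspan]
    trivial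
  have hconv : Convex ℝ (convexHull ℝ S) := convex_convexHull ℝ S
  have hne : (interior (convexHull ℝ S)).Nonempty := by
    rw [hconv.interior_nonempty_iff_affineSpan_eq_top]
    rw [← top_le_iff, ← haff]
    exact affineSpan_mono ℝ (subset_convexHull ℝ S)
  obtain ⟨x, hx⟩ := hne
  have hnegx : -x ∈ convexHull ℝ S := by
    have hxS : x ∈ convexHull ℝ S := interior_subset hx
    have : -x ∈ convexHull ℝ (-S) := by
      rw [convexHull_neg]; exact Set.neg_mem_neg.mpr hxS
    exact convexHull_mono hSneg this
  have h0 : (0 : Fin d → ℝ) = (1/2 : ℝ) • x + (1/2 : ℝ) • (-x) := by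
    simp [smul_neg]
  rw [h0]
  exact hconv.combo_interior_closure_mem_interior hx (subset_closure hnegx)
    (by norm_num) (by norm_num) (by norm_num)
end

section
/- Let P and Q be finite posets on [d], and let Δ(P,−Q) be the convex hull of Ω(P,−Q). If the origin of ℝ^d belongs to the interior of Δ(P,−Q), then P and Q possess a common linear extension. -/
/-! A common linear extension exists as soon as the preorder generated by `≤_P ∪ ≤_Q` is
antisymmetric. A cycle `a → ⋯ → b → ⋯ → a` with `a ≠ b` is ruled out by a separating
functional: every step `x ≤_P y` gives `e_x - e_y` in the dual cone of `{ρ(I) : I a P-ideal}`,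
and similarly for `Q`, so the cycle yields `f` in the dual cone for `P` with `-f` in the dual
cone for `Q`, i.e. `f ≥ 0` on `Ω(P,-Q)`. These dual cones are pointed, because
`e_x = ρ(↓x) - ρ(↓x ∖ {x})`; so `f = 0` would kill both components of the path from `a` to `b`,
contradicting `a ≠ b`. Hence `0` is not interior to `Δ(P,-Q)`. -/

open Relation

section LinearExtension

variable {α : Type*} [Fintype α] {r : α → α → Prop}

theorem exists_equiv_fin_of_reflTransGen_antisymm
    (h : ∀ a b, ReflTransGen r a b → ReflTransGen r b a → a = b) {n : ℕ}
    (hn : Fintype.card α = n) : ∃ e : Fin n ≃ α, ∀ i j, r (e i) (e j) → i ≤ j := by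
  let _ : PartialOrder α :=
    { le := ReflTransGen r
      le_refl := fun _ => .refl
      le_trans := fun _ _ _ => .trans
      le_antisymm := h }
  let _ : Fintype (LinearExtension α) := ‹Fintype α›
  let e := Fintype.orderIsoFinOfCardEq (LinearExtension α) hn
  refine ⟨e.toEquiv, fun i j hij => ?_⟩
  exact e.le_iff_le.mp (toLinearExtension (α := α).monotone (ReflTransGen.single hij))

end LinearExtension

theorem zero_notMem_interior_convexHull_of_nonneg {E : Type*} [AddCommGroup E]
    [TopologicalSpace E] [ContinuousAdd E] [Module ℝ E] [ContinuousSMul ℝ E] {s : Set E}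
    {φ : StrongDual ℝ E} (hφ : φ ≠ 0) (hs : ∀ x ∈ s, 0 ≤ φ x) :
    (0 : E) ∉ interior (convexHull ℝ s) := by
  have hsub : convexHull ℝ s ⊆ φ ⁻¹' Set.Ici 0 :=
    convexHull_min hs ((convex_Ici 0).linear_preimage φ.toLinearMap)
  intro h0
  have := (φ.isOpenMap_of_ne_zero hφ).interior_preimage_subset_preimage_interior
    (interior_mono hsub h0)
  simp at this

theorem zero_notMem_interior_convexHull_of_dotProduct_nonneg {ι : Type*} [Fintype ι]
    {s : Set (ι → ℝ)} {f : ι → ℝ} (hf : f ≠ 0) (hs : ∀ x ∈ s, 0 ≤ f ⬝ᵥ x) :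
    (0 : ι → ℝ) ∉ interior (convexHull ℝ s) := by
  refine zero_notMem_interior_convexHull_of_nonneg
    (φ := (dotProductBilin ℝ ℝ f).toContinuousLinearMap) (fun hφ => hf ?_) hs
  exact dotProduct_self_eq_zero.mp (by simpa using congrArg (· f) hφ)

section IdealDualCone

variable {d : ℕ}

open Classical in
lemma rho_apply (I : Set (Fin d)) (x : Fin d) : rho I x = if x ∈ I then 1 else 0 := by
  simp [rho, Set.indicator_apply]

noncomputable def idealDualCone (P : PartialOrder (Fin d)) : PointedCone ℝ (Fin d → ℝ) :=
  PointedCone.dual (dotProductBilin ℝ ℝ) (rho '' {I | IsIdeal P I})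

lemma mem_idealDualCone {P : PartialOrder (Fin d)} {f : Fin d → ℝ} :
    f ∈ idealDualCone P ↔ ∀ I, IsIdeal P I → 0 ≤ rho I ⬝ᵥ f := by
  simp [idealDualCone]

lemma single_sub_single_mem_idealDualCone {P : PartialOrder (Fin d)} {x y : Fin d}
    (hxy : P.le x y) : Pi.single x 1 - Pi.single y 1 ∈ idealDualCone P := by
  refine mem_idealDualCone.mpr fun I hI => ?_
  have : y ∈ I → x ∈ I := fun hy => hI hy hxy
  rw [dotProduct_sub, dotProduct_single_one, dotProduct_single_one, rho_apply, rho_apply]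
  split_ifs <;> simp_all

lemma rho_Iic_sub_rho_Iio (P : PartialOrder (Fin d)) (x : Fin d) :
    rho {z | P.le z x} - rho {z | P.lt z x} = Pi.single x 1 := by
  ext z
  rcases eq_or_ne z x with rfl | hzx
  · simp [rho_apply]
  · have hlt : P.lt z x ↔ P.le z x := ⟨fun h => h.le, fun h => lt_of_le_of_ne h hzx⟩
    rw [Pi.sub_apply, rho_apply, rho_apply, Set.mem_ofPred_eq, Set.mem_ofPred_eq, hlt, sub_self,
      Pi.single_eq_of_ne hzx]

lemma eq_zero_of_mem_idealDualCone_of_neg_mem {P : PartialOrder (Fin d)} {f : Fin d → ℝ}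
    (hf : f ∈ idealDualCone P) (hnf : -f ∈ idealDualCone P) : f = 0 := by
  have hzero : ∀ I, IsIdeal P I → rho I ⬝ᵥ f = 0 := fun I hI =>
    le_antisymm (by simpa using mem_idealDualCone.mp hnf I hI) (mem_idealDualCone.mp hf I hI)
  ext x
  have hIic : IsIdeal P {z | P.le z x} := fun _ _ hi hji => P.le_trans _ _ _ hji hi
  have hIio : IsIdeal P {z | P.lt z x} := fun _ _ hi hji => lt_of_le_of_lt hji hi
  rw [Pi.zero_apply, ← single_one_dotProduct x f, ← rho_Iic_sub_rho_Iio P, sub_dotProduct,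
    hzero _ hIic, hzero _ hIio, sub_zero]

lemma exists_idealDualCone_add_of_reflTransGen {P Q : PartialOrder (Fin d)} {a b : Fin d}
    (h : ReflTransGen (fun x y => P.le x y ∨ Q.le x y) a b) :
    ∃ f ∈ idealDualCone P, ∃ g ∈ idealDualCone Q, f + g = Pi.single a 1 - Pi.single b 1 := by
  induction h with
  | refl => exact ⟨0, zero_mem _, 0, zero_mem _, by simp⟩
  | @tail b c _ hbc ih =>
    obtain ⟨f, hf, g, hg, hfg⟩ := ih
    have hstep : Pi.single a 1 - Pi.single c 1 =
        Pi.single a 1 - Pi.single b 1 + (Pi.single b 1 - Pi.single c 1 : Fin d → ℝ) := by abel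
    rcases hbc with hbc | hbc
    · refine ⟨f + _, add_mem hf (single_sub_single_mem_idealDualCone hbc), g, hg, ?_⟩
      rw [hstep, ← hfg]; abel
    · refine ⟨f, hf, g + _, add_mem hg (single_sub_single_mem_idealDualCone hbc), ?_⟩
      rw [hstep, ← hfg]; abel

lemma dotProduct_nonneg_of_mem_Omega {P Q : PartialOrder (Fin d)} {f : Fin d → ℝ}
    (hP : f ∈ idealDualCone P) (hQ : -f ∈ idealDualCone Q) : ∀ ω ∈ Omega P Q, 0 ≤ f ⬝ᵥ ω := by
  rintro ω ((⟨I, hI, -, rfl⟩ | ⟨J, hJ, -, rfl⟩) | rfl)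
  · rw [dotProduct_comm]; exact mem_idealDualCone.mp hP I hI
  · simpa [dotProduct_comm] using mem_idealDualCone.mp hQ J hJ
  · simp

lemma eq_zero_of_add_eq_zero_of_mem_idealDualCone {P : PartialOrder (Fin d)} {f g : Fin d → ℝ}
    (hf : f ∈ idealDualCone P) (hg : g ∈ idealDualCone P) (hfg : f + g = 0) : f = 0 :=
  eq_zero_of_mem_idealDualCone_of_neg_mem hf (neg_eq_of_add_eq_zero_right hfg ▸ hg)

theorem reflTransGen_antisymm_of_zero_mem_interior {P Q : PartialOrder (Fin d)}
    (h : (0 : Fin d → ℝ) ∈ interior (convexHull ℝ (Omega P Q))) {a b : Fin d}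
    (hab : ReflTransGen (fun x y => P.le x y ∨ Q.le x y) a b)
    (hba : ReflTransGen (fun x y => P.le x y ∨ Q.le x y) b a) : a = b := by
  by_contra hne
  obtain ⟨f₁, hf₁, g₁, hg₁, hfg₁⟩ := exists_idealDualCone_add_of_reflTransGen hab
  obtain ⟨f₂, hf₂, g₂, hg₂, hfg₂⟩ := exists_idealDualCone_add_of_reflTransGen hba
  have hg : g₁ + g₂ = -(f₁ + f₂) := by
    rw [eq_neg_iff_add_eq_zero]; linear_combination hfg₁ + hfg₂
  have hf : f₁ + f₂ ≠ 0 := by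
    intro hf
    have hf₁0 := eq_zero_of_add_eq_zero_of_mem_idealDualCone hf₁ hf₂ hf
    have hg₁0 := eq_zero_of_add_eq_zero_of_mem_idealDualCone hg₁ hg₂ (by rw [hg, hf, neg_zero])
    simpa [hf₁0, hg₁0, hne] using congrFun hfg₁ a
  exact zero_notMem_interior_convexHull_of_dotProduct_nonneg hf
    (dotProduct_nonneg_of_mem_Omega (add_mem hf₁ hf₂) (hg ▸ add_mem hg₁ hg₂)) h

lemma isLinExt_of_le {P : PartialOrder (Fin d)} {σ : Equiv.Perm (Fin d)}
    (h : ∀ a b, P.le (σ a) (σ b) → a ≤ b) : IsLinExt P σ := by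
  intro a b hab
  refine Fin.lt_iff_le_and_ne.mpr ⟨h a b hab.le, ?_⟩
  rintro rfl
  exact lt_irrefl _ hab

end IdealDualCone

theorem common_linExt_of_zero_mem_interior {d : ℕ} (P Q : PartialOrder (Fin d))
    (h : (0 : Fin d → ℝ) ∈ interior (convexHull ℝ (Omega P Q))) :
    ∃ σ : Equiv.Perm (Fin d), IsLinExt P σ ∧ IsLinExt Q σ := by
  obtain ⟨σ, hσ⟩ := exists_equiv_fin_of_reflTransGen_antisymm
    (fun _ _ => reflTransGen_antisymm_of_zero_mem_interior h) (Fintype.card_fin d)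
  exact ⟨σ, isLinExt_of_le fun a b hab => hσ a b (.inl hab),
    isLinExt_of_le fun a b hab => hσ a b (.inr hab)⟩
end

section
/- Let P be a finite poset on [d] ordered so that p_r < p_s implies r < s. Let I₁ ⊆ I₂ ⊆ ⋯ ⊆ I_a be a chain of nonempty poset ideals of P with multiplicities ξ₁,...,ξ_a > 0, and let A_i = Σ_{e : i ∈ I_e} ξ_e be the i-th coordinate of Σ_e ξ_e ρ(I_e). Let A'_i arise similarly from another chain of ideals of P with positive multiplicities. Suppose j is an index and e is minimal with j ∈ I_e. If A_j > A'_j and A_h = A'_h for all h > j, then p_j is a maximal element of I_e. -/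
/-- A poset ideal (down-set) of `P`, as a `Finset`. -/
def IsIdealF {d : ℕ} (P : PartialOrder (Fin d)) (I : Finset (Fin d)) : Prop :=
  ∀ ⦃i j : Fin d⦄, i ∈ I → P.le j i → j ∈ I

/-- The indicator vector `ρ(I) ∈ ℤ^d` of a finite subset of `[d]`. -/
def rhoZ {d : ℕ} (I : Finset (Fin d)) : Fin d → ℤ := fun i => if i ∈ I then 1 else 0

theorem maximal_in_ideal_of_coord_gap {d n m : ℕ} (P : PartialOrder (Fin d))
    (hlab : ∀ r s : Fin d, P.lt r s → r < s)
    (I : Fin n → Finset (Fin d)) (ξ : Fin n → ℕ)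
    (I' : Fin m → Finset (Fin d)) (ξ' : Fin m → ℕ)
    (hI : ∀ e, IsIdealF P (I e) ∧ (I e).Nonempty) (hξ : ∀ e, 0 < ξ e)
    (hchain : Monotone I)
    (hI' : ∀ e, IsIdealF P (I' e) ∧ (I' e).Nonempty) (hξ' : ∀ e, 0 < ξ' e)
    (hchain' : Monotone I')
    (A A' : Fin d → ℕ)
    (hA : ∀ i, A i = ∑ e : Fin n, if i ∈ I e then ξ e else 0)
    (hA' : ∀ i, A' i = ∑ e : Fin m, if i ∈ I' e then ξ' e else 0)
    (j : Fin d) (e : Fin n) (hje : j ∈ I e) (hemin : ∀ f, j ∈ I f → e ≤ f)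
    (hhigh : ∀ h : Fin d, j < h → A h = A' h) (hjgap : A' j < A j) :
    ∀ h ∈ I e, ¬ P.lt j h := by
  intro h hh hlt
  have hjh : j < h := hlab _ _ hlt
  have hle : P.le j h := le_of_lt hlt
  -- A j = A h
  have hAjh : A j = A h := by
    rw [hA, hA]
    refine Finset.sum_congr rfl fun f _ => ?_
    congr 1
    apply propext
    constructor
    · intro hjf
      exact hchain (hemin f hjf) hh
    · intro hhf
      exact (hI f).1 hhf hle
  -- A' h ≤ A' j
  have hA'le : A' h ≤ A' j := by
    rw [hA', hA']
    refine Finset.sum_le_sum fun f _ => ?_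
    by_cases hhf : h ∈ I' f
    · simp [hhf, (hI' f).1 hhf hle]
    · simp [hhf]
  have := hhigh h hjh
  omega
end

section
/- Let P and Q be finite posets on [d]. If P and Q possess a common linear extension, then the twinned order polytope Δ(P,−Q) ⊂ ℝ^d is a lattice polytope containing the origin in its interior whose vertices all lie in {−1,0,1}^d (it is a Fano-type polytope: a full-dimensional lattice polytope with 0 in its interior). -/
open Set

theorem zero_mem_interior_convexHull_of_neg_mem {E : Type*} [NormedAddCommGroup E]
    [NormedSpace ℝ E] [FiniteDimensional ℝ E] {s : Set E} (h0 : (0 : E) ∈ s)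
    (hneg : ∀ x ∈ s, -x ∈ s) (hspan : Submodule.span ℝ s = ⊤) :
    (0 : E) ∈ interior (convexHull ℝ s) := by
  have haff : affineSpan ℝ s = ⊤ := by
    rw [AffineSubspace.affineSpan_eq_top_iff_vectorSpan_eq_top_of_nonempty ℝ E E ⟨0, h0⟩,
      vectorSpan_eq_span_vsub_set_right ℝ h0]
    simpa using hspan
  obtain ⟨x, hx⟩ := interior_convexHull_nonempty_iff_affineSpan_eq_top.mpr haff
  have hsymm : -convexHull ℝ s = convexHull ℝ s := by
    rw [← convexHull_neg]
    congr 1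
    exact Subset.antisymm (fun x hx => by simpa using hneg _ hx)
      fun x hx => by simpa using hneg _ hx
  have hnx : -x ∈ interior (convexHull ℝ s) :=
    interior_maximal (by rw [← hsymm]; exact neg_subset_neg.mpr interior_subset)
      isOpen_interior.neg (by simpa using hx)
  simpa using (convex_convexHull ℝ s).interior hx hnx (by norm_num : (0 : ℝ) ≤ 1 / 2)
    (by norm_num : (0 : ℝ) ≤ 1 / 2) (add_halves 1)

section

variable {d : ℕ}

theorem rho_apply_eq_zero_or_one (I : Set (Fin d)) (i : Fin d) :
    rho I i = 0 ∨ rho I i = 1 := by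
  by_cases h : i ∈ I <;> simp [rho, h]

theorem rho_insert {I : Set (Fin d)} {j : Fin d} (hj : j ∉ I) :
    rho (insert j I) = rho I + Pi.single j 1 := by
  rw [rho, rho, Set.insert_eq, Set.indicator_union_of_disjoint (by simpa using hj), add_comm]
  ext i
  simp [Pi.single_apply, Set.indicator_apply]

theorem apply_eq_neg_one_or_zero_or_one_of_mem_Omega {P Q : PartialOrder (Fin d)}
    {v : Fin d → ℝ} (hv : v ∈ Omega P Q) (i : Fin d) : v i = -1 ∨ v i = 0 ∨ v i = 1 := by
  rcases hv with (⟨I, -, -, rfl⟩ | ⟨J, -, -, rfl⟩) | rfl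
  · rcases rho_apply_eq_zero_or_one I i with h | h <;> simp [h]
  · rcases rho_apply_eq_zero_or_one J i with h | h <;> simp [h]
  · simp

theorem rho_mem_Omega_inter_neg {P Q : PartialOrder (Fin d)} {I : Set (Fin d)}
    (hP : IsIdeal P I) (hQ : IsIdeal Q I) : rho I ∈ Omega P Q ∩ -Omega P Q := by
  rcases I.eq_empty_or_nonempty with rfl | hI
  · rw [show rho (∅ : Set (Fin d)) = 0 from indicator_empty _]
    exact ⟨Or.inr rfl, Or.inr neg_zero⟩
  · exact ⟨Or.inl (Or.inl ⟨I, hP, hI, rfl⟩), Or.inl (Or.inr ⟨I, hQ, hI, rfl⟩)⟩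

theorem IsLinExt.isIdeal_image {P : PartialOrder (Fin d)} {σ : Equiv.Perm (Fin d)}
    (hσ : IsLinExt P σ) {D : Set (Fin d)} (hD : IsLowerSet D) : IsIdeal P (σ '' D) := by
  rintro _ j ⟨a, ha, rfl⟩ hja
  obtain ⟨b, rfl⟩ := σ.surjective j
  by_cases hab : σ b = σ a
  · exact ⟨a, ha, hab.symm⟩
  · have hba : b < a := hσ b a (@lt_of_le_of_ne _ P _ _ hja hab)
    exact ⟨b, hD (Fin.le_of_lt hba) ha, rfl⟩

theorem span_rho_image_isLowerSet_eq_top (σ : Equiv.Perm (Fin d)) :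
    Submodule.span ℝ {v | ∃ D : Set (Fin d), IsLowerSet D ∧ v = rho (σ '' D)} = ⊤ := by
  rw [eq_top_iff, ← (Pi.basisFun ℝ (Fin d)).span_eq, Submodule.span_le]
  rintro _ ⟨j, rfl⟩
  obtain ⟨k, rfl⟩ := σ.surjective j
  have hstep : Pi.basisFun ℝ (Fin d) (σ k) = rho (σ '' Iic k) - rho (σ '' Iio k) := by
    rw [← Iio_insert, image_insert_eq, rho_insert (by simp), add_sub_cancel_left,
      Pi.basisFun_apply]
  rw [hstep]
  exact Submodule.sub_mem _ (Submodule.subset_span ⟨_, isLowerSet_Iic k, rfl⟩)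
    (Submodule.subset_span ⟨_, isLowerSet_Iio k, rfl⟩)

theorem span_Omega_inter_neg_eq_top {P Q : PartialOrder (Fin d)} {σ : Equiv.Perm (Fin d)}
    (hP : IsLinExt P σ) (hQ : IsLinExt Q σ) :
    Submodule.span ℝ (Omega P Q ∩ -Omega P Q) = ⊤ := by
  refine eq_top_mono (Submodule.span_mono ?_) (span_rho_image_isLowerSet_eq_top σ)
  rintro _ ⟨D, hD, rfl⟩
  exact rho_mem_Omega_inter_neg (hP.isIdeal_image hD) (hQ.isIdeal_image hD)

end

theorem twinned_is_fano_type {d : ℕ} (P Q : PartialOrder (Fin d))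
    (σ : Equiv.Perm (Fin d)) (hP : IsLinExt P σ) (hQ : IsLinExt Q σ) :
    (∀ v ∈ Omega P Q, ∀ i : Fin d, v i = -1 ∨ v i = 0 ∨ v i = 1) ∧
    (0 : Fin d → ℝ) ∈ interior (convexHull ℝ (Omega P Q)) := by
  refine ⟨fun v hv => apply_eq_neg_one_or_zero_or_one_of_mem_Omega hv, ?_⟩
  have hzero : (0 : Fin d → ℝ) ∈ Omega P Q ∩ -Omega P Q := ⟨Or.inr rfl, Or.inr neg_zero⟩
  have hneg : ∀ v ∈ Omega P Q ∩ -Omega P Q, -v ∈ Omega P Q ∩ -Omega P Q :=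
    fun v hv => ⟨hv.2, by simpa using hv.1⟩
  exact interior_mono (convexHull_mono inter_subset_left)
    (zero_mem_interior_convexHull_of_neg_mem hzero hneg (span_Omega_inter_neg_eq_top hP hQ))
end
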